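/- arXiv:2311.15370 — 6 statements merged into one kernel-verified Lean document; each statement's English description precedes it below -/
import Mathlib

section
/- A sequence α = a_1 ... a_n of nonnegative integers is a d-increasing d-ascent sequence if and only if a_1 = 0 and a_k - d < a_{k+1} ≤ k for all k ∈ [n-1]. -/
def dasc (d : ℕ) (a : ℕ → ℕ) (k : ℕ) : ℕ :=
  ((Finset.Ico 1 k).filter (fun i => (a i : ℤ) - d < a (i + 1))).card

def IsDAscSeq (d n : ℕ) (a : ℕ → ℕ) : Prop :=
  (1 ≤ n → a 1 = 0) ∧ ∀ k, 1 ≤ k → k < n → a (k + 1) ≤ 1 + dasc d a k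

/-- α is a d-increasing d-ascent sequence iff a_1 = 0 and
a_k - d < a_{k+1} ≤ k for all k ∈ [n-1]. -/
theorem dInc_dAscSeq_iff (d n : ℕ) (a : ℕ → ℕ) :
    (IsDAscSeq d n a ∧ ∀ k, 1 ≤ k → k < n → (a k : ℤ) - d < a (k + 1)) ↔
      ((1 ≤ n → a 1 = 0) ∧
        ∀ k, 1 ≤ k → k < n → (a k : ℤ) - d < a (k + 1) ∧ a (k + 1) ≤ k) := by
  constructor
  · rintro ⟨⟨h0, hseq⟩, hinc⟩
    refine ⟨h0, fun k hk1 hkn => ⟨hinc k hk1 hkn, ?_⟩⟩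
    have hb : dasc d a k ≤ k - 1 := by
      calc dasc d a k ≤ (Finset.Ico 1 k).card := Finset.card_filter_le _ _
        _ = k - 1 := Nat.card_Ico 1 k
    have := hseq k hk1 hkn
    omega
  · rintro ⟨h0, h⟩
    refine ⟨⟨h0, fun k hk1 hkn => ?_⟩, fun k hk1 hkn => (h k hk1 hkn).1⟩
    have hd : dasc d a k = k - 1 := by
      have : (Finset.Ico 1 k).filter (fun i => (a i : ℤ) - d < a (i + 1)) =
          Finset.Ico 1 k := by
        apply Finset.filter_true_of_mem
        intro i hi
        rw [Finset.mem_Ico] at hi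
        exact (h i hi.1 (lt_of_lt_of_le hi.2 (le_of_lt hkn))).1
      rw [dasc, this, Nat.card_Ico]
    have := (h k hk1 hkn).2
    omega
end

section
/- For all d ≥ 0 and n ≥ 1, the number i_n of d-increasing d-ascent sequences of length n satisfies the recursion i_n = Σ_{k≥1} (-1)^{k-1} · binom(n - kd + d, k) · i_{n-k}, where i_0 = 1. -/
/-!
Write `N m c` for the number of sequences of length `m` ending in `c`. Appending `c` to a
sequence of length `m` keeps it a d-increasing d-ascent sequence iff `c ≤ m` and the old last
entry is `< c + d`, so `N (m + 1) c = i_m - ∑_{c' ≥ c + d} N m c'`. From this recursion alone,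
by induction on `m` (exchange the order of summation, then apply the hockey-stick identity), the
binomially weighted tail sums `∑_{c ≥ p} C(c - p + r, r) N m c` equal
`∑_j (-1)^j C(m + r - j d - p, j + r + 1) i_{m-1-j}`. For `r = p = 0` and `m ≥ 1` the left side
is `i_m`, which gives the recursion.
-/

/-- The set of d-increasing d-ascent sequences of length n, modeled as
functions `Fin n → ℕ` (0-indexed: `f i` is `a_{i+1}`): `a_1 = 0` and
`a_k - d < a_{k+1} ≤ k` (subtraction over ℤ) for `k ∈ [n-1]`. -/
def dIncSet (d n : ℕ) : Set (Fin n → ℕ) :=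
  {f | (∀ h : 0 < n, f ⟨0, h⟩ = 0) ∧
    ∀ (i : ℕ) (h : i + 1 < n),
      (f ⟨i, Nat.lt_of_succ_lt h⟩ : ℤ) - d < f ⟨i + 1, h⟩ ∧ f ⟨i + 1, h⟩ ≤ i + 1}

open Finset

lemma Nat.sum_Ico_sub_add_choose (p b r : ℕ) :
    ∑ c ∈ Ico p b, (c - p + r).choose r = (b + r - p).choose (r + 1) := by
  rw [sum_Ico_eq_sum_range]
  simp_rw [add_tsub_cancel_left]
  rcases Nat.lt_or_ge b (p + 1) with h | h
  · rw [Nat.sub_eq_zero_of_le (by omega), sum_range_zero, Nat.choose_eq_zero_of_lt (by omega)]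
  · obtain ⟨k, hk⟩ : ∃ k, b - p = k + 1 := ⟨b - p - 1, by omega⟩
    rw [hk, Nat.sum_range_add_choose]
    congr 1
    omega

theorem sum_Ico_choose_mul_eq_of_recursion {d : ℕ} {I : ℕ → ℤ} {N : ℕ → ℕ → ℤ}
    (hN : ∀ m c, c ≤ m → N (m + 1) c = I m - ∑ c' ∈ Ico (c + d) m, N m c') (m r p : ℕ) :
    ∑ c ∈ Ico p m, ((c - p + r).choose r : ℤ) * N m c =
      ∑ j ∈ range m, (-1) ^ j * ((m + r - (j * d + p)).choose (j + r + 1) : ℤ) * I (m - 1 - j) := by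
  induction m generalizing r p with
  | zero => simp
  | succ m ih =>
    calc ∑ c ∈ Ico p (m + 1), ((c - p + r).choose r : ℤ) * N (m + 1) c
        = ∑ c ∈ Ico p (m + 1), ((c - p + r).choose r : ℤ) * (I m - ∑ c' ∈ Ico (c + d) m, N m c') :=
          sum_congr rfl fun c hc => by rw [hN m c (by grind)]
      _ = (∑ c ∈ Ico p (m + 1), ((c - p + r).choose r : ℤ)) * I m
            - ∑ c ∈ Ico p (m + 1), ∑ c' ∈ Ico (c + d) m, ((c - p + r).choose r : ℤ) * N m c' := by
          simp only [mul_sub, sum_sub_distrib, sum_mul, mul_sum]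
      _ = ((m + 1 + r - p).choose (r + 1) : ℤ) * I m
            - ∑ c' ∈ Ico (p + d) m, ((c' - (p + d) + (r + 1)).choose (r + 1) : ℤ) * N m c' := by
          rw [← Nat.sum_Ico_sub_add_choose, Nat.cast_sum,
            sum_comm' (t' := Ico (p + d) m) (s' := fun c' => Ico p (c' - d + 1)) (by grind)]
          refine congrArg _ (sum_congr rfl fun c' hc' => ?_)
          rw [← sum_mul, ← Nat.cast_sum, Nat.sum_Ico_sub_add_choose]
          grind
      _ = ∑ j ∈ range (m + 1), (-1) ^ j * ((m + 1 + r - (j * d + p)).choose (j + r + 1) : ℤ)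
            * I (m + 1 - 1 - j) := by
          rw [ih, sum_range_succ' _ m, sub_eq_add_neg, ← sum_neg_distrib, add_comm]
          congr 1
          · refine sum_congr rfl fun j _ => ?_
            rw [show m + 1 + r - ((j + 1) * d + p) = m + (r + 1) - (j * d + (p + d)) by
                rw [add_mul, one_mul]; omega,
              show j + 1 + r + 1 = j + (r + 1) + 1 by omega,
              show m + 1 - 1 - (j + 1) = m - 1 - j by omega, pow_succ]
            ring
          · simp

lemma le_of_mem_dIncSet {d m : ℕ} {f : Fin m → ℕ} (hf : f ∈ dIncSet d m) (i : Fin m) :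
    f i ≤ i := by
  obtain ⟨_ | k, hk⟩ := i
  · exact (hf.1 hk).le
  · exact (hf.2 k hk).2

lemma dIncSet_finite (d m : ℕ) : (dIncSet d m).Finite :=
  (Set.finite_Iic (fun i : Fin m => (i : ℕ))).subset fun _ hf i => le_of_mem_dIncSet hf i

lemma mem_dIncSet_succ_succ_iff {d m : ℕ} {f : Fin (m + 2) → ℕ} :
    f ∈ dIncSet d (m + 2) ↔ Fin.init f ∈ dIncSet d (m + 1) ∧
      Fin.init f (Fin.last m) < f (Fin.last (m + 1)) + d ∧ f (Fin.last (m + 1)) ≤ m + 1 := by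
  change _ ↔ _ ∧ f ⟨m, by omega⟩ < f ⟨m + 1, by omega⟩ + d ∧ f ⟨m + 1, by omega⟩ ≤ m + 1
  constructor
  · rintro ⟨h0, hstep⟩
    have hlast := hstep m (by omega)
    exact ⟨⟨fun _ => h0 _, fun i hi => hstep i (by omega)⟩, by omega, hlast.2⟩
  · rintro ⟨⟨h0, hstep⟩, hlt, hle⟩
    refine ⟨fun _ => h0 (by omega), fun i hi => ?_⟩
    rcases Nat.lt_or_ge (i + 1) (m + 1) with h | h
    · exact hstep i h
    · obtain rfl : i = m := by omega
      exact ⟨by omega, hle⟩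

noncomputable def dIncFinset (d m : ℕ) : Finset (Fin m → ℕ) := (dIncSet_finite d m).toFinset

@[simp]
lemma mem_dIncFinset {d m : ℕ} {f : Fin m → ℕ} : f ∈ dIncFinset d m ↔ f ∈ dIncSet d m :=
  Set.Finite.mem_toFinset _

lemma ncard_dIncSet (d m : ℕ) : (dIncSet d m).ncard = #(dIncFinset d m) :=
  Set.ncard_eq_toFinset_card _ _

noncomputable def numEndingIn (d m c : ℕ) : ℕ := #{f ∈ dIncFinset d (m + 1) | f (Fin.last m) = c}

lemma numEndingIn_succ {d m c : ℕ} (hc : c ≤ m + 1) :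
    numEndingIn d (m + 1) c = #{g ∈ dIncFinset d (m + 1) | g (Fin.last m) < c + d} := by
  refine card_nbij' Fin.init (Fin.snoc · c) ?_ ?_ ?_ ?_
  · intro f hf
    simp only [mem_coe, mem_filter, mem_dIncFinset] at hf ⊢
    obtain ⟨hf, rfl⟩ := hf
    obtain ⟨hinit, hlt, -⟩ := mem_dIncSet_succ_succ_iff.1 hf
    exact ⟨hinit, hlt⟩
  · intro g hg
    simp only [mem_coe, mem_filter, mem_dIncFinset] at hg ⊢
    refine ⟨mem_dIncSet_succ_succ_iff.2 ?_, Fin.snoc_last ..⟩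
    simpa only [Fin.init_snoc, Fin.snoc_last] using ⟨hg.1, hg.2, hc⟩
  · intro f hf
    simp only [mem_coe, mem_filter] at hf
    rw [← hf.2]
    exact Fin.snoc_init_self f
  · intro g _
    exact Fin.init_snoc ..

lemma card_filter_le_last (d m w : ℕ) :
    #{g ∈ dIncFinset d (m + 1) | w ≤ g (Fin.last m)} = ∑ c ∈ Ico w (m + 1), numEndingIn d m c := by
  rw [card_eq_sum_card_fiberwise (f := fun g => g (Fin.last m)) (t := Ico w (m + 1))]
  · refine sum_congr rfl fun c hc => ?_
    rw [numEndingIn, filter_filter]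
    refine congrArg _ (filter_congr fun g _ => ?_)
    grind
  · intro g hg
    simp only [mem_coe, mem_filter, mem_dIncFinset] at hg
    exact mem_Ico.2 ⟨hg.2, Nat.lt_succ_of_le (le_of_mem_dIncSet hg.1 _)⟩

lemma ncard_dIncSet_succ (d m : ℕ) :
    (dIncSet d (m + 1)).ncard = ∑ c ∈ range (m + 1), numEndingIn d m c := by
  rw [ncard_dIncSet, range_eq_Ico, ← card_filter_le_last, filter_true_of_mem fun _ _ => Nat.zero_le _]

lemma ncard_dIncSet_zero (d : ℕ) : (dIncSet d 0).ncard = 1 := by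
  have : dIncSet d 0 = Set.univ :=
    Set.eq_univ_of_forall fun _ => ⟨fun h => absurd h (lt_irrefl 0), fun _ h => absurd h (by omega)⟩
  rw [this, Set.ncard_univ, Nat.card_unique]

lemma numEndingIn_zero (d : ℕ) : numEndingIn d 0 0 = 1 := by
  refine card_eq_one.2 ⟨0, ext fun f => ?_⟩
  simp [dIncSet, funext_iff, Fin.forall_fin_one]

lemma numEndingIn_eq {d m c : ℕ} (hc : c ≤ m) :
    (numEndingIn d m c : ℤ) =
      (dIncSet d m).ncard - ∑ c' ∈ Ico (c + d) m, (numEndingIn d (m - 1) c' : ℤ) := by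
  cases m with
  | zero =>
    obtain rfl : c = 0 := by omega
    simp [numEndingIn_zero, ncard_dIncSet_zero]
  | succ m =>
    have hsplit := card_filter_add_card_filter_not (s := dIncFinset d (m + 1))
      (fun g => g (Fin.last m) < c + d)
    simp only [not_lt, card_filter_le_last] at hsplit
    rw [numEndingIn_succ hc, ncard_dIncSet, ← hsplit, Nat.add_sub_cancel]
    push_cast
    ring

/-- The recursion i_n = Σ_{k ≥ 1} (-1)^{k-1} binom(n - kd + d, k) i_{n-k} for n ≥ 1
(terms with k > n vanish, and i_0 = 1 holds by definition). -/
theorem dInc_card_recursion (d n : ℕ) (hn : 1 ≤ n) :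
    ((dIncSet d n).ncard : ℤ) =
      ∑ k ∈ Finset.Icc 1 n,
        (-1 : ℤ) ^ (k - 1) * (n + d - k * d : ℕ).choose k * (dIncSet d (n - k)).ncard := by
  obtain ⟨m, rfl⟩ := Nat.exists_eq_add_of_le' hn
  have key := sum_Ico_choose_mul_eq_of_recursion (I := fun m => ((dIncSet d m).ncard : ℤ))
    (N := fun m c => (numEndingIn d (m - 1) c : ℤ)) (fun m c hc => numEndingIn_eq hc) (m + 1) 0 0
  simp only [Nat.choose_zero_right, Nat.cast_one, one_mul, add_zero, Nat.add_sub_cancel,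
    ← range_eq_Ico] at key
  rw [ncard_dIncSet_succ, Nat.cast_sum, key, ← Ico_add_one_right_eq_Icc, sum_Ico_eq_sum_range,
    Nat.add_sub_cancel]
  refine sum_congr rfl fun j _ => ?_
  have hd : m + 1 + d - (1 + j) * d = m + 1 - j * d := by rw [add_mul, one_mul]; omega
  rw [hd, Nat.add_sub_cancel_left, add_comm 1 j, Nat.add_sub_add_right]
end

section
/- There are exactly n! factorial posets on the ground set [n]. -/
/-- A partial order on `Fin n` (the ground set `[n]`) is factorial if
`i < j` as integers and `j <_P k` imply `i <_P k`. -/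
def IsFactorial {n : ℕ} (P : PartialOrder (Fin n)) : Prop :=
  ∀ i j k : Fin n, (i : ℕ) < (j : ℕ) → P.lt j k → P.lt i k

/-- Down-closed finsets of naturals are initial segments. -/
lemma downclosed_eq_range (t : Finset ℕ) (h : ∀ j ∈ t, ∀ i < j, i ∈ t) :
    t = Finset.range t.card := by
  have hsub : t ⊆ Finset.range t.card := by
    intro m hm
    have hss : Finset.range (m + 1) ⊆ t := by
      intro i hi
      rcases Nat.lt_succ_iff_lt_or_eq.mp (Finset.mem_range.mp hi) with h' | h'
      · exact h m hm i h'
      · exact h' ▸ hm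
    have := Finset.card_le_card hss
    simp only [Finset.card_range] at this
    exact Finset.mem_range.mpr this
  exact Finset.eq_of_subset_of_card_le hsub (by simp)

lemma fin_downclosed {n : ℕ} (S : Finset (Fin n))
    (h : ∀ j ∈ S, ∀ i : Fin n, (i : ℕ) < (j : ℕ) → i ∈ S) (i : Fin n) :
    i ∈ S ↔ (i : ℕ) < S.card := by
  have hinj : Function.Injective (Fin.val (n := n)) := Fin.val_injective
  set t := S.image Fin.val with ht
  have hdc : ∀ j ∈ t, ∀ m < j, m ∈ t := by
    intro j hj m hm
    obtain ⟨j', hj', rfl⟩ := Finset.mem_image.mp hj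
    have hmn : m < n := hm.trans j'.isLt
    exact Finset.mem_image.mpr ⟨⟨m, hmn⟩, h j' hj' ⟨m, hmn⟩ hm, rfl⟩
  have hcard : t.card = S.card := Finset.card_image_of_injective _ hinj
  have hrange := downclosed_eq_range t hdc
  constructor
  · intro hi
    have : (i : ℕ) ∈ Finset.range t.card := hrange ▸ Finset.mem_image_of_mem _ hi
    simpa [hcard] using Finset.mem_range.mp this
  · intro hi
    have : (i : ℕ) ∈ t := by
      rw [hrange, hcard]; exact Finset.mem_range.mpr hi
    obtain ⟨i', hi', hii⟩ := Finset.mem_image.mp this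
    rwa [hinj hii] at hi'

/-- The partial order built from a choice function. -/
def mkP {n : ℕ} (f : ∀ k : Fin n, Fin ((k : ℕ) + 1)) : PartialOrder (Fin n) where
  le i k := i = k ∨ (i : ℕ) < (f k : ℕ)
  lt i k := (i : ℕ) < (f k : ℕ)
  le_refl i := Or.inl rfl
  le_trans i j k hij hjk := by
    rcases hij with rfl | hij
    · exact hjk
    · rcases hjk with rfl | hjk
      · exact Or.inr hij
      · exact Or.inr (lt_of_lt_of_le (hij.trans_le (Nat.lt_succ_iff.mp (f j).isLt)) hjk.le)
  le_antisymm i k hik hki := by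
    rcases hik with rfl | hik
    · rfl
    · rcases hki with rfl | hki
      · rfl
      · exact absurd (hik.trans_le (Nat.lt_succ_iff.mp (f k).isLt))
          (not_lt.mpr (hki.trans_le (Nat.lt_succ_iff.mp (f i).isLt)).le)
  lt_iff_le_not_ge i k := by
    constructor
    · intro h
      have hik : (i : ℕ) < (k : ℕ) := h.trans_le (Nat.lt_succ_iff.mp (f k).isLt)
      refine ⟨Or.inr h, ?_⟩
      rintro (rfl | hki)
      · exact lt_irrefl _ hik
      · exact absurd hik (not_lt.mpr (hki.trans_le (Nat.lt_succ_iff.mp (f i).isLt)).le)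
    · rintro ⟨rfl | h, h2⟩
      · exact absurd (Or.inl rfl) h2
      · exact h

lemma mkP_factorial {n : ℕ} (f : ∀ k : Fin n, Fin ((k : ℕ) + 1)) :
    IsFactorial (mkP f) := fun _ _ _ hij hjk => hij.trans hjk

lemma plt_iff {n : ℕ} (P : PartialOrder (Fin n)) (a b : Fin n) :
    P.lt a b ↔ P.le a b ∧ ¬ P.le b a := @lt_iff_le_not_ge _ P.toPreorder a b

/-- The lower set of `k` in a factorial poset. -/
noncomputable def lowSet {n : ℕ} (P : PartialOrder (Fin n)) (k : Fin n) : Finset (Fin n) :=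
  @Finset.filter _ (fun i => P.lt i k) (Classical.decPred _) Finset.univ

lemma mem_lowSet {n : ℕ} (P : PartialOrder (Fin n)) (k i : Fin n) :
    i ∈ lowSet P k ↔ P.lt i k := by
  simp [lowSet, Finset.mem_filter]

lemma lowSet_downclosed {n : ℕ} {P : PartialOrder (Fin n)} (hP : IsFactorial P) (k : Fin n) :
    ∀ j ∈ lowSet P k, ∀ i : Fin n, (i : ℕ) < (j : ℕ) → i ∈ lowSet P k := by
  intro j hj i hij
  rw [mem_lowSet] at hj ⊢
  exact hP i j k hij hj

lemma lowSet_mem_iff {n : ℕ} {P : PartialOrder (Fin n)} (hP : IsFactorial P) (k i : Fin n) :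
    P.lt i k ↔ (i : ℕ) < (lowSet P k).card := by
  rw [← fin_downclosed (lowSet P k) (lowSet_downclosed hP k) i, mem_lowSet]

lemma lowSet_card_le {n : ℕ} {P : PartialOrder (Fin n)} (hP : IsFactorial P) (k : Fin n) :
    (lowSet P k).card ≤ (k : ℕ) := by
  by_contra h
  have hlt : P.lt k k := (lowSet_mem_iff hP k k).mpr (not_le.mp h)
  exact ((plt_iff P k k).mp hlt).2 ((plt_iff P k k).mp hlt).1

/-- The choice function of a factorial poset. -/
noncomputable def toF {n : ℕ} (P : {P : PartialOrder (Fin n) // IsFactorial P}) (k : Fin n) :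
    Fin ((k : ℕ) + 1) :=
  ⟨(lowSet P.1 k).card, Nat.lt_succ_of_le (lowSet_card_le P.2 k)⟩

/-- The equivalence between factorial posets and choice functions. -/
noncomputable def factorialEquiv (n : ℕ) :
    {P : PartialOrder (Fin n) // IsFactorial P} ≃ (∀ k : Fin n, Fin ((k : ℕ) + 1)) where
  toFun := toF
  invFun f := ⟨mkP f, mkP_factorial f⟩
  left_inv := by
    rintro ⟨P, hP⟩
    apply Subtype.ext
    apply PartialOrder.ext
    intro a b
    show a = b ∨ (a : ℕ) < (toF ⟨P, hP⟩ b : ℕ) ↔ P.le a b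
    rw [show ((toF ⟨P, hP⟩ b : ℕ)) = (lowSet P b).card from rfl, ← lowSet_mem_iff hP b a]
    constructor
    · rintro (rfl | h)
      · exact P.le_refl a
      · exact ((plt_iff P a b).mp h).1
    · intro h
      by_cases hba : P.le b a
      · exact Or.inl (P.le_antisymm a b h hba)
      · exact Or.inr ((plt_iff P a b).mpr ⟨h, hba⟩)
  right_inv := by
    intro f
    funext k
    apply Fin.ext
    show (lowSet (mkP f) k).card = (f k : ℕ)
    have hmem : ∀ i : Fin n, i ∈ lowSet (mkP f) k ↔ (i : ℕ) < (f k : ℕ) := by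
      intro i
      rw [mem_lowSet]
      exact Iff.rfl
    have hmem' : ∀ i : Fin n, i ∈ lowSet (mkP f) k ↔ (i : ℕ) < (lowSet (mkP f) k).card :=
      fun i => fin_downclosed _ (lowSet_downclosed (mkP_factorial f) k) i
    by_contra hne
    rcases Nat.lt_or_ge (lowSet (mkP f) k).card (f k : ℕ) with h | h
    · have hlt : (lowSet (mkP f) k).card < n := by
        have := (f k).isLt
        have hk := k.isLt
        omega
      have : (⟨(lowSet (mkP f) k).card, hlt⟩ : Fin n) ∈ lowSet (mkP f) k :=
        (hmem _).mpr h
      exact lt_irrefl _ ((hmem' _).mp this)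
    · have h' : (f k : ℕ) < (lowSet (mkP f) k).card := lt_of_le_of_ne h (Ne.symm hne)
      have hlt : (f k : ℕ) < n := by
        have := (f k).isLt
        have hk := k.isLt
        omega
      have : (⟨(f k : ℕ), hlt⟩ : Fin n) ∈ lowSet (mkP f) k := (hmem' _).mpr h'
      exact lt_irrefl _ ((hmem _).mp this)

/-- There are exactly n! factorial posets on the ground set [n]. -/
theorem card_factorial_posets (n : ℕ) :
    Nat.card {P : PartialOrder (Fin n) // IsFactorial P} = n.factorial := by
  rw [Nat.card_congr (factorialEquiv n), Nat.card_pi]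
  simp only [Nat.card_eq_fintype_card, Fintype.card_fin]
  rw [Fin.prod_univ_eq_prod_range (fun i => i + 1) n]
  exact Finset.prod_range_add_one_eq_factorial n
end

section
/- Fix d ≥ 1 and a d-ascent sequence α = a_1 ... a_n. Define a binary relation on [n] by i <_P j iff dasc(α_i) < a_j, for distinct i, j. Then <_P is a strict partial order (irreflexive, antisymmetric, transitive) and the resulting poset P on [n] is factorial; moreover i <_P j implies i < j as integers. -/
/-- The relation on indices: for distinct i, j, set i <_P j iff dasc(α_i) < a_j. -/
def PoRel (d : ℕ) (a : ℕ → ℕ) (i j : ℕ) : Prop :=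
  i ≠ j ∧ dasc d a i < a j

lemma dasc_mono (d : ℕ) (a : ℕ → ℕ) {i j : ℕ} (h : i ≤ j) : dasc d a i ≤ dasc d a j :=
  Finset.card_le_card (Finset.filter_subset_filter _ (Finset.Ico_subset_Ico le_rfl h))

lemma dasc_key (d n : ℕ) (hd : 1 ≤ d) (a : ℕ → ℕ) (ha : IsDAscSeq d n a) {i j : ℕ}
    (hj1 : 1 ≤ j) (hji : j ≤ i) (hin : i ≤ n) : a j ≤ dasc d a i := by
  by_contra hcon
  push_neg at hcon
  obtain ⟨ha1, ha2⟩ := ha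
  rcases Nat.lt_or_ge j 2 with hj2 | hj2
  · interval_cases j
    · have := ha1 (by omega)
      omega
  · obtain ⟨m, rfl⟩ : ∃ m, j = m + 2 := ⟨j - 2, by omega⟩
    have h1 : a (m + 2) ≤ 1 + dasc d a (m + 1) := ha2 (m + 1) (by omega) (by omega)
    have hm : dasc d a (m + 1) ≤ dasc d a i := dasc_mono d a (by omega)
    have heq : dasc d a (m + 1) = dasc d a i := by unfold dasc at *; omega
    have hset : (Finset.Ico 1 (m + 1)).filter (fun i => (a i : ℤ) - d < a (i + 1)) =
        (Finset.Ico 1 i).filter (fun i => (a i : ℤ) - d < a (i + 1)) :=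
      Finset.eq_of_subset_of_card_le
        (Finset.filter_subset_filter _ (Finset.Ico_subset_Ico le_rfl (by omega)))
        (le_of_eq heq.symm)
    have hna : ¬ ((a (m + 1) : ℤ) - d < a (m + 2)) := by
      intro hlt
      have : m + 1 ∈ (Finset.Ico 1 i).filter (fun i => (a i : ℤ) - d < a (i + 1)) := by
        simp only [Finset.mem_filter, Finset.mem_Ico]
        exact ⟨⟨by omega, by omega⟩, hlt⟩
      rw [← hset] at this
      simp only [Finset.mem_filter, Finset.mem_Ico] at this
      omega
    push_neg at hna
    rcases Nat.eq_zero_or_pos m with rfl | hm1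
    · have := ha1 (by omega)
      simp only [Nat.zero_add] at *
      omega
    · have h2 : a (m + 1) ≤ 1 + dasc d a m := ha2 m hm1 (by omega)
      have h3 : dasc d a m ≤ dasc d a (m + 1) := dasc_mono d a (by omega)
      have h4 : a (m + 2) = a (m + 1 + 1) := rfl
      omega

/-- For d ≥ 1 and a d-ascent sequence α of length n, the relation
i <_P j iff dasc(α_i) < a_j (for distinct i, j) is a strict partial order on [n],
the resulting poset is factorial, and it is naturally labeled. -/
theorem poRel_factorial_poset (d n : ℕ) (hd : 1 ≤ d) (a : ℕ → ℕ)
    (ha : IsDAscSeq d n a) :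
    (∀ i ∈ Finset.Icc 1 n, ¬ PoRel d a i i) ∧
    (∀ i ∈ Finset.Icc 1 n, ∀ j ∈ Finset.Icc 1 n,
      PoRel d a i j → ¬ PoRel d a j i) ∧
    (∀ i ∈ Finset.Icc 1 n, ∀ j ∈ Finset.Icc 1 n, ∀ k ∈ Finset.Icc 1 n,
      PoRel d a i j → PoRel d a j k → PoRel d a i k) ∧
    (∀ i ∈ Finset.Icc 1 n, ∀ j ∈ Finset.Icc 1 n, ∀ k ∈ Finset.Icc 1 n,
      i < j → PoRel d a j k → PoRel d a i k) ∧
    (∀ i ∈ Finset.Icc 1 n, ∀ j ∈ Finset.Icc 1 n, PoRel d a i j → i < j) := by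
  have hlab : ∀ i ∈ Finset.Icc 1 n, ∀ j ∈ Finset.Icc 1 n, PoRel d a i j → i < j := by
    intro i hi j hj ⟨hne, hlt⟩
    simp only [Finset.mem_Icc] at hi hj
    by_contra h
    push_neg at h
    have := dasc_key d n hd a ha hj.1 h hi.2
    omega
  refine ⟨fun i _ ⟨hne, _⟩ => hne rfl, ?_, ?_, ?_, hlab⟩
  · intro i hi j hj hij hji
    exact absurd (hlab j hj i hi hji) (Nat.lt_asymm (hlab i hi j hj hij))
  · intro i hi j hj k hk ⟨hne1, h1⟩ ⟨hne2, h2⟩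
    have hij := hlab i hi j hj ⟨hne1, h1⟩
    have hjk := hlab j hj k hk ⟨hne2, h2⟩
    exact ⟨by omega, lt_of_le_of_lt (dasc_mono d a hij.le) h2⟩
  · intro i hi j hj k hk hij ⟨hne2, h2⟩
    have hjk := hlab j hj k hk ⟨hne2, h2⟩
    exact ⟨by omega, lt_of_le_of_lt (dasc_mono d a hij.le) h2⟩
end

section
/- Fix d ≥ 1. The map sending a d-ascent sequence α = a_1 ... a_n to the factorial poset P on [n] defined by i <_P j iff dasc(α_i) < a_j is injective: if two d-ascent sequences of the same length give the same poset, they are equal. Specifically, for the last entry, a_n = 0 if n is minimal in P, and otherwise a_n = dasc(α_m) + 1 where m = max{i : i <_P n}. -/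
lemma dasc_congr (d : ℕ) (a b : ℕ → ℕ) (i : ℕ)
    (h : ∀ j, 1 ≤ j → j ≤ i → a j = b j) : dasc d a i = dasc d b i := by
  unfold dasc
  congr 1
  apply Finset.filter_congr
  intro x hx
  simp only [Finset.mem_Ico] at hx
  rw [h x hx.1 (le_of_lt hx.2), h (x + 1) (by omega) (by omega)]

lemma dasc_one (d : ℕ) (a : ℕ → ℕ) : dasc d a 1 = 0 := by
  unfold dasc
  simp

lemma dasc_succ_le (d : ℕ) (a : ℕ → ℕ) (k : ℕ) :
    dasc d a (k + 1) ≤ dasc d a k + 1 := by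
  unfold dasc
  have hsub : (Finset.Ico 1 (k + 1)).filter (fun i => (a i : ℤ) - d < a (i + 1)) ⊆
      insert k ((Finset.Ico 1 k).filter (fun i => (a i : ℤ) - d < a (i + 1))) := by
    intro x hx
    simp only [Finset.mem_filter, Finset.mem_Ico, Finset.mem_insert] at hx ⊢
    omega
  calc ((Finset.Ico 1 (k + 1)).filter (fun i => (a i : ℤ) - d < a (i + 1))).card
      ≤ (insert k ((Finset.Ico 1 k).filter (fun i => (a i : ℤ) - d < a (i + 1)))).card :=
        Finset.card_le_card hsub
    _ ≤ ((Finset.Ico 1 k).filter (fun i => (a i : ℤ) - d < a (i + 1))).card + 1 :=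
        Finset.card_insert_le _ _

lemma last_entry (d : ℕ) (a : ℕ → ℕ) (N : ℕ) (h1 : a 1 = 0)
    (hasc : ∀ k, 1 ≤ k → k < N → a (k + 1) ≤ 1 + dasc d a k) (hN : 1 ≤ N) :
    ((∀ i ∈ Finset.Icc 1 N, ¬ PoRel d a i N) → a N = 0) ∧
    (∀ m ∈ Finset.Icc 1 N, PoRel d a m N →
      (∀ i ∈ Finset.Icc 1 N, PoRel d a i N → i ≤ m) →
      a N = dasc d a m + 1) := by
  classical
  constructor
  · intro h
    by_contra ha0
    have haN : 0 < a N := Nat.pos_of_ne_zero ha0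
    rcases eq_or_lt_of_le hN with h1N | h1N
    · rw [← h1N] at haN
      omega
    · exact h 1 (Finset.mem_Icc.2 ⟨le_refl 1, hN⟩) ⟨by omega, by rw [dasc_one]; exact haN⟩
  · intro m hm hrel hmax
    have hmn : m ≠ N := hrel.1
    have hm2 := Finset.mem_Icc.1 hm
    have hm' : m < N := lt_of_le_of_ne hm2.2 hmn
    have hm1 : 1 ≤ m := hm2.1
    have hN2 : 2 ≤ N := by omega
    have hascN : a N ≤ 1 + dasc d a (N - 1) := by
      have h := hasc (N - 1) (by omega) (by omega)
      have hx : N - 1 + 1 = N := by omega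
      rwa [hx] at h
    set T := (Finset.Icc m (N - 1)).filter (fun i => dasc d a i < a N) with hT
    have hmT : m ∈ T := Finset.mem_filter.2 ⟨Finset.mem_Icc.2 ⟨le_refl _, by omega⟩, hrel.2⟩
    have hTne : T.Nonempty := ⟨m, hmT⟩
    set i := T.max' hTne with hi_def
    have hiT : i ∈ T := T.max'_mem hTne
    obtain ⟨hiIcc, hilt⟩ := Finset.mem_filter.1 hiT
    have hiIcc' := Finset.mem_Icc.1 hiIcc
    have hiN : i ≤ N - 1 := hiIcc'.2
    have him : m ≤ i := hiIcc'.1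
    have hrel_i : PoRel d a i N := ⟨by omega, hilt⟩
    have hile : i ≤ m := hmax i (Finset.mem_Icc.2 ⟨by omega, by omega⟩) hrel_i
    have him' : i = m := le_antisymm hile him
    by_cases hi : i = N - 1
    · have hEq : dasc d a (N - 1) = dasc d a m := by rw [← hi, him']
      have := hrel.2
      omega
    · have hi1 : i + 1 ≤ N - 1 := by omega
      have hnotT : i + 1 ∉ T := by
        intro hmem
        have := T.le_max' _ hmem
        omega
      have hge : ¬ dasc d a (i + 1) < a N := by
        intro hlt
        exact hnotT (Finset.mem_filter.2 ⟨Finset.mem_Icc.2 ⟨by omega, hi1⟩, hlt⟩)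
      have hstep := dasc_succ_le d a i
      have hEq : dasc d a i = dasc d a m := by rw [him']
      have := hrel.2
      omega

/-- For d ≥ 1, the map α ↦ P (where i <_P j iff dasc(α_i) < a_j) is injective on
d-ascent sequences of length n; specifically, a_n = 0 if n is minimal in P, and
otherwise a_n = dasc(α_m) + 1 where m = max{i : i <_P n}. -/
theorem poRel_injective (d n : ℕ) (hd : 1 ≤ d) (a b : ℕ → ℕ)
    (ha : IsDAscSeq d n a) (hb : IsDAscSeq d n b) :
    ((∀ i ∈ Finset.Icc 1 n, ∀ j ∈ Finset.Icc 1 n, (PoRel d a i j ↔ PoRel d b i j)) →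
      ∀ k ∈ Finset.Icc 1 n, a k = b k) ∧
    (1 ≤ n →
      ((∀ i ∈ Finset.Icc 1 n, ¬ PoRel d a i n) → a n = 0) ∧
      (∀ m ∈ Finset.Icc 1 n, PoRel d a m n →
        (∀ i ∈ Finset.Icc 1 n, PoRel d a i n → i ≤ m) →
        a n = dasc d a m + 1)) := by
  classical
  obtain ⟨ha1, haasc⟩ := ha
  obtain ⟨hb1, hbasc⟩ := hb
  constructor
  · intro hrel
    have key : ∀ k, ∀ j, 1 ≤ j → j ≤ k → j ≤ n → a j = b j := by
      intro k
      induction k with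
      | zero => intro j h1 h2 _; omega
      | succ k ih =>
        intro j h1 h2 h3
        by_cases hjk : j ≤ k
        · exact ih j h1 hjk h3
        · have hj : j = k + 1 := by omega
          subst hj
          by_cases hk0 : k = 0
          · subst hk0
            rw [ha1 h3, hb1 h3]
          · have hk1 : 1 ≤ k := by omega
            have hdasc_eq : ∀ i, i ≤ k → dasc d a i = dasc d b i := by
              intro i hi
              exact dasc_congr d a b i (fun j hj1 hj2 => ih j hj1 (le_trans hj2 hi) (by omega))
            have lastA := last_entry d a (k + 1) (ha1 (by omega))
              (fun k' h1' h2' => haasc k' h1' (by omega)) (by omega)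
            have lastB := last_entry d b (k + 1) (hb1 (by omega))
              (fun k' h1' h2' => hbasc k' h1' (by omega)) (by omega)
            have hmemn : ∀ i, 1 ≤ i → i ≤ k + 1 → i ∈ Finset.Icc 1 n :=
              fun i hi1 hi2 => Finset.mem_Icc.2 ⟨hi1, by omega⟩
            have hiff : ∀ i, 1 ≤ i → i ≤ k + 1 →
                (PoRel d a i (k + 1) ↔ PoRel d b i (k + 1)) :=
              fun i hi1 hi2 => hrel i (hmemn i hi1 hi2) (k + 1) (hmemn (k + 1) (by omega) le_rfl)
            set S := (Finset.Icc 1 k).filter (fun i => PoRel d a i (k + 1)) with hS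
            rcases S.eq_empty_or_nonempty with hSe | hSne
            · have hnoA : ∀ i ∈ Finset.Icc 1 (k + 1), ¬ PoRel d a i (k + 1) := by
                intro i hi hp
                have hi' := Finset.mem_Icc.1 hi
                by_cases hik : i ≤ k
                · have : i ∈ S := Finset.mem_filter.2 ⟨Finset.mem_Icc.2 ⟨hi'.1, hik⟩, hp⟩
                  rw [hSe] at this
                  exact absurd this (Finset.notMem_empty i)
                · exact hp.1 (by omega)
              have hnoB : ∀ i ∈ Finset.Icc 1 (k + 1), ¬ PoRel d b i (k + 1) := by
                intro i hi hp
                have hi' := Finset.mem_Icc.1 hi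
                exact hnoA i hi ((hiff i hi'.1 hi'.2).2 hp)
              rw [lastA.1 hnoA, lastB.1 hnoB]
            · set m := S.max' hSne with hm_def
              have hmS : m ∈ S := S.max'_mem hSne
              obtain ⟨hmIcc, hmp⟩ := Finset.mem_filter.1 hmS
              have hm' := Finset.mem_Icc.1 hmIcc
              have hmaxA : ∀ i ∈ Finset.Icc 1 (k + 1), PoRel d a i (k + 1) → i ≤ m := by
                intro i hi hp
                have hi' := Finset.mem_Icc.1 hi
                have hik : i ≤ k := by
                  have := hp.1
                  omega
                exact S.le_max' i (Finset.mem_filter.2 ⟨Finset.mem_Icc.2 ⟨hi'.1, hik⟩, hp⟩)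
              have hA : a (k + 1) = dasc d a m + 1 :=
                lastA.2 m (Finset.mem_Icc.2 ⟨hm'.1, by omega⟩) hmp hmaxA
              have hmpb : PoRel d b m (k + 1) := (hiff m hm'.1 (by omega)).1 hmp
              have hmaxB : ∀ i ∈ Finset.Icc 1 (k + 1), PoRel d b i (k + 1) → i ≤ m := by
                intro i hi hp
                have hi' := Finset.mem_Icc.1 hi
                exact hmaxA i hi ((hiff i hi'.1 hi'.2).2 hp)
              have hB : b (k + 1) = dasc d b m + 1 :=
                lastB.2 m (Finset.mem_Icc.2 ⟨hm'.1, by omega⟩) hmpb hmaxB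
              rw [hA, hB, hdasc_eq m hm'.2]
    intro k hk
    have hk' := Finset.mem_Icc.1 hk
    exact key n k hk'.1 hk'.2 hk'.2
  · intro hn
    exact last_entry d a n (ha1 hn) haasc hn
end

section
/- If ρ = r_1 ... r_n is a restricted growth function and P is the poset on [n] defined by i <_P j iff max(ρ_i) < r_j (for distinct i, j), then for every k ∈ [n]: r_k = 0 if k is minimal in P, and otherwise r_k = max(ρ_m) + 1 where m = max{i : i <_P k}. Consequently the map ρ ↦ P is injective on RGFs of length n. -/
/-- The maximum entry of the length-`k` prefix of the (1-indexed) sequence `r`. -/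
def prefMax (r : ℕ → ℕ) (k : ℕ) : ℕ := (Finset.Icc 1 k).sup r

/-- `r 1, ..., r n` is a restricted growth function: `r 1 = 0` and
`r (k+1) ≤ 1 + max(r 1, ..., r k)` for `k ∈ [1, n-1]`. -/
def IsRGF (n : ℕ) (r : ℕ → ℕ) : Prop :=
  (1 ≤ n → r 1 = 0) ∧ ∀ k, 1 ≤ k → k < n → r (k + 1) ≤ 1 + prefMax r k

/-- The relation on indices: for distinct i, j, set i <_P j iff max(ρ_i) < r_j. -/
def RgfRel (r : ℕ → ℕ) (i j : ℕ) : Prop :=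
  i ≠ j ∧ prefMax r i < r j

lemma le_prefMax (r : ℕ → ℕ) {k : ℕ} (hk : 1 ≤ k) : r k ≤ prefMax r k :=
  Finset.le_sup (Finset.mem_Icc.mpr ⟨hk, le_refl k⟩)

lemma prefMax_mono (r : ℕ → ℕ) {a b : ℕ} (h : a ≤ b) : prefMax r a ≤ prefMax r b :=
  Finset.sup_mono (Finset.Icc_subset_Icc_right h)

lemma rgf_part1 (n : ℕ) (r : ℕ → ℕ) (hr : IsRGF n r) {k : ℕ} (hk : k ∈ Finset.Icc 1 n)
    (h : ∀ i ∈ Finset.Icc 1 n, ¬ RgfRel r i k) : r k = 0 := by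
  simp only [Finset.mem_Icc] at hk
  by_contra hne
  rcases Nat.eq_or_lt_of_le hk.1 with h1 | h1
  · exact hne (h1 ▸ hr.1 (by omega))
  · apply h 1 (Finset.mem_Icc.mpr ⟨le_refl 1, by omega⟩)
    refine ⟨by omega, ?_⟩
    have h2 : prefMax r 1 = r 1 := by simp [prefMax]
    rw [h2, hr.1 (by omega)]
    omega

lemma rgf_part2 (n : ℕ) (r : ℕ → ℕ) (hr : IsRGF n r) {k : ℕ} (hk : k ∈ Finset.Icc 1 n)
    {m : ℕ} (hm : m ∈ Finset.Icc 1 n) (hrel : RgfRel r m k)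
    (hmax : ∀ i ∈ Finset.Icc 1 n, RgfRel r i k → i ≤ m) :
    r k = prefMax r m + 1 := by
  simp only [Finset.mem_Icc] at hk hm
  have hk1 := le_prefMax r hk.1
  have hrel2 := hrel.2
  have hmk : m < k := by
    by_contra h
    have := prefMax_mono r (le_of_not_gt h : k ≤ m)
    omega
  have hrgf := hr.2 m hm.1 (by omega)
  rcases Nat.eq_or_lt_of_le (Nat.succ_le_of_lt hmk) with h1 | h1
  · simp only [← h1, Nat.succ_eq_add_one] at hrel2 ⊢; omega
  · have h2 : ¬ RgfRel r (m + 1) k :=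
      fun hrel' => by have := hmax (m + 1) (Finset.mem_Icc.mpr ⟨by omega, by omega⟩) hrel'; omega
    have h3 : r k ≤ prefMax r (m + 1) := by
      by_contra h4; exact h2 ⟨by omega, by omega⟩
    have h5 : prefMax r (m + 1) ≤ max (prefMax r m) (r (m + 1)) := by
      apply Finset.sup_le
      intro x hx
      simp only [Finset.mem_Icc] at hx
      rcases Nat.eq_or_lt_of_le hx.2 with h | h
      · simp [h]
      · exact le_max_of_le_left (Finset.le_sup (Finset.mem_Icc.mpr ⟨hx.1, by omega⟩))
    omega

/-- For an RGF ρ and the poset P defined by i <_P j iff max(ρ_i) < r_j: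
r_k = 0 whenever k is minimal in P, otherwise r_k = max(ρ_m) + 1 where
m = max{i : i <_P k}; consequently ρ ↦ P is injective on RGFs of length n. -/
theorem rgfRel_values_and_injective (n : ℕ) (r : ℕ → ℕ) (hr : IsRGF n r) :
    (∀ k ∈ Finset.Icc 1 n,
      ((∀ i ∈ Finset.Icc 1 n, ¬ RgfRel r i k) → r k = 0) ∧
      (∀ m ∈ Finset.Icc 1 n, RgfRel r m k →
        (∀ i ∈ Finset.Icc 1 n, RgfRel r i k → i ≤ m) →
        r k = prefMax r m + 1)) ∧
    (∀ s : ℕ → ℕ, IsRGF n s →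
      (∀ i ∈ Finset.Icc 1 n, ∀ j ∈ Finset.Icc 1 n, (RgfRel r i j ↔ RgfRel s i j)) →
      ∀ k ∈ Finset.Icc 1 n, r k = s k) := by
  constructor
  · intro k hk
    exact ⟨rgf_part1 n r hr hk, fun m hm hrel hmax => rgf_part2 n r hr hk hm hrel hmax⟩
  · intro s hs hiff k
    induction k using Nat.strong_induction_on with
    | _ k ih =>
      intro hk
      classical
      set S := (Finset.Icc 1 n).filter (fun i => RgfRel r i k) with hS
      by_cases hne : S.Nonempty
      · set m := S.max' hne with hmdef
        have hmS : m ∈ S := S.max'_mem hne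
        rw [hS, Finset.mem_filter] at hmS
        have hmax : ∀ i ∈ Finset.Icc 1 n, RgfRel r i k → i ≤ m :=
          fun i hi hrel => S.le_max' i (by rw [hS, Finset.mem_filter]; exact ⟨hi, hrel⟩)
        have hrk : r k = prefMax r m + 1 := rgf_part2 n r hr hk hmS.1 hmS.2 hmax
        have hrels : RgfRel s m k := (hiff m hmS.1 k hk).mp hmS.2
        have hmaxs : ∀ i ∈ Finset.Icc 1 n, RgfRel s i k → i ≤ m :=
          fun i hi hrel => hmax i hi ((hiff i hi k hk).mpr hrel)
        have hsk : s k = prefMax s m + 1 := rgf_part2 n s hs hk hmS.1 hrels hmaxs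
        have hmk : m < k := by
          have h1 := hmS.2.2
          have hk1 : 1 ≤ k := (Finset.mem_Icc.mp hk).1
          have h2 := le_prefMax r hk1
          by_contra h
          have := prefMax_mono r (le_of_not_gt h : k ≤ m)
          omega
        have hmn : m ≤ n := (Finset.mem_Icc.mp hmS.1).2
        have hpref : prefMax r m = prefMax s m := by
          apply Finset.sup_congr rfl
          intro i hi
          simp only [Finset.mem_Icc] at hi
          exact ih i (by omega) (Finset.mem_Icc.mpr ⟨hi.1, by omega⟩)
        rw [hrk, hsk, hpref]
      · have hmin : ∀ i ∈ Finset.Icc 1 n, ¬ RgfRel r i k := by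
          intro i hi hrel
          exact hne ⟨i, by rw [hS, Finset.mem_filter]; exact ⟨hi, hrel⟩⟩
        have hmins : ∀ i ∈ Finset.Icc 1 n, ¬ RgfRel s i k :=
          fun i hi hrel => hmin i hi ((hiff i hi k hk).mpr hrel)
        rw [rgf_part1 n r hr hk hmin, rgf_part1 n s hs hk hmins]
end
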